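/- arXiv:1903.03053 — 5 statements merged into one kernel-verified Lean document; each statement's English description precedes it below -/
import Mathlib

section
/- (Violated Hoffman cut from the APM limit orbit.) Under the closest-pair setup with X ∩ Y_p = ∅ and assuming Σ_t p_t = Σ_n E_n, the pair (T₀, N₀) defines a Hoffman cut violated by p: Σ_{n∈N₀} E_n − Σ_{t∈T₀} p_t + Σ_{t∈T₀, n∉N₀} x̄_{n,t} − Σ_{t∉T₀, n∈N₀} x̲_{n,t} < 0. -/
/-!
Both halves of the closest pair are projections, and their first-order optimality conditions
carry the argument. Since `y^∞ = P_{Y_p}(x^∞)` and `Y_p` is invariant under moving mass within a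
column, the residual `x^∞ - y^∞` is constant on each column, with the sign of
`Σ_n x^∞_{n,t} - p_t`; so `T₀` is where the residual is negative. Since `x^∞ = P_X(y^∞)`,
shifting load within a row from `t₂` to `t₁` (possible when `x^∞_{n,t₁} < x̄_{n,t₁}` and
`x^∞_{n,t₂} > x̲_{n,t₂}`) cannot decrease the distance, so the residual at `t₁` is at least the one
at `t₂`. Hence every row sits at its upper bounds on `T₀` or at its lower bounds off `T₀`, and its
demand decides which (this is membership in `N₀`). Summing rows, the cut value is
`Σ_{t ∈ T₀} (Σ_n x^∞_{n,t} - p_t)`, which is negative because `T₀ ≠ ∅`: otherwise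
`Σ_t p_t = Σ_n E_n` would force `x^∞ ∈ Y_p`.
-/

open Finset

noncomputable def frobNorm {N T : ℕ} (a : Fin N → Fin T → ℝ) : ℝ :=
  Real.sqrt (∑ n, ∑ t, (a n t) ^ 2)

section Matrices

variable {N T : ℕ}

def frobInner (a b : Fin N → Fin T → ℝ) : ℝ := ∑ n, ∑ t, a n t * b n t

def feasibleSet (E : Fin N → ℝ) (lb ub : Fin N → Fin T → ℝ) : Set (Fin N → Fin T → ℝ) :=
  {ℓ | ∀ n, (∑ t, ℓ n t) = E n ∧ ∀ t, lb n t ≤ ℓ n t ∧ ℓ n t ≤ ub n t}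

def profileSet (p : Fin T → ℝ) : Set (Fin N → Fin T → ℝ) :=
  {z | ∀ t, (∑ n, z n t) = p t}

lemma frobNorm_nonneg (a : Fin N → Fin T → ℝ) : 0 ≤ frobNorm a := Real.sqrt_nonneg _

lemma frobNorm_sq (a : Fin N → Fin T → ℝ) : frobNorm a ^ 2 = ∑ n, ∑ t, a n t ^ 2 :=
  Real.sq_sqrt (by positivity)

lemma frobNorm_add_smul_sq (d v : Fin N → Fin T → ℝ) (s : ℝ) :
    frobNorm (d + s • v) ^ 2
      = frobNorm d ^ 2 + 2 * s * frobInner d v + s ^ 2 * frobNorm v ^ 2 := by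
  simp only [frobNorm_sq, frobInner, mul_sum, ← sum_add_distrib]
  refine sum_congr rfl fun n _ => sum_congr rfl fun t _ => ?_
  simp only [Pi.add_apply, Pi.smul_apply, smul_eq_mul]
  ring

lemma frobInner_single (d : Fin N → Fin T → ℝ) (n : Fin N) (t : Fin T) :
    frobInner d (Pi.single n (Pi.single t 1)) = d n t := by
  simp [frobInner, Pi.single_apply, ite_apply]

lemma frobInner_neg (d v : Fin N → Fin T → ℝ) : frobInner d (-v) = -frobInner d v := by
  simp [frobInner]

lemma frobInner_sub (d v w : Fin N → Fin T → ℝ) :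
    frobInner d (v - w) = frobInner d v - frobInner d w := by
  simp [frobInner, mul_sub]

lemma frobInner_nonneg_of_forall_frobNorm_le {d v : Fin N → Fin T → ℝ} {δ : ℝ} (hδ : 0 < δ)
    (h : ∀ s, 0 < s → s ≤ δ → frobNorm d ≤ frobNorm (d + s • v)) : 0 ≤ frobInner d v := by
  by_contra! hneg
  -- small enough that the quadratic term cannot offset the negative linear one
  set s := min δ (-frobInner d v / (frobNorm v ^ 2 + 1))
  have hs : 0 < s := lt_min hδ (div_pos (neg_pos.2 hneg) (by positivity))
  have hsv : s * (frobNorm v ^ 2 + 1) ≤ -frobInner d v :=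
    (le_div_iff₀ (by positivity)).1 (min_le_right _ _)
  have hsq := pow_le_pow_left₀ (frobNorm_nonneg d) (h s hs (min_le_left _ _)) 2
  rw [frobNorm_add_smul_sq] at hsq
  nlinarith [mul_le_mul_of_nonneg_left hsv hs.le, mul_pos hs (neg_pos.2 hneg)]

lemma sub_apply_eq_of_isMinOn_profileSet {x y : Fin N → Fin T → ℝ} {p : Fin T → ℝ}
    (hy : y ∈ profileSet p) (hmin : IsMinOn (fun b => frobNorm (x - b)) (profileSet p) y)
    (n m : Fin N) (t : Fin T) : x n t - y n t = x m t - y m t := by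
  set v : Fin N → Fin T → ℝ := Pi.single n (Pi.single t 1) - Pi.single m (Pi.single t 1)
  have hv : ∀ s : ℝ, y - s • v ∈ profileSet p := fun s τ => by
    simp [v, Pi.single_apply, ite_apply, mul_sub, mul_ite, sum_sub_distrib, hy τ]
  have hdir : ∀ w, (∀ s : ℝ, y - s • w ∈ profileSet p) → 0 ≤ frobInner (x - y) w :=
    fun w hw => frobInner_nonneg_of_forall_frobNorm_le one_pos fun s _ _ => by
      simpa [sub_sub_eq_add_sub, add_sub_right_comm] using isMinOn_iff.1 hmin _ (hw s)
  have h₁ := hdir v hv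
  have h₂ := hdir (-v) fun s => by simpa using hv (-s)
  rw [frobInner_neg] at h₂
  have : frobInner (x - y) v = 0 := by linarith
  simpa [v, frobInner_sub, frobInner_single, sub_eq_zero] using this

lemma add_smul_single_sub_single_mem_feasibleSet {E : Fin N → ℝ} {lb ub x : Fin N → Fin T → ℝ}
    (hx : x ∈ feasibleSet E lb ub) {n : Fin N} {t₁ t₂ : Fin T} (ht : t₁ ≠ t₂) {s : ℝ}
    (hs : 0 ≤ s) (h₁ : x n t₁ + s ≤ ub n t₁) (h₂ : lb n t₂ ≤ x n t₂ - s) :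
    x + s • (Pi.single n (Pi.single t₁ 1) - Pi.single n (Pi.single t₂ 1))
      ∈ feasibleSet E lb ub := by
  intro m
  refine ⟨?_, fun τ => ?_⟩
  · simp [Pi.single_apply, ite_apply, mul_sub, mul_ite, sum_add_distrib, sum_sub_distrib, (hx m).1]
  obtain ⟨hlb, hub⟩ := (hx m).2 τ
  by_cases hm : m = n
  · subst hm
    by_cases hτ₁ : τ = t₁
    · subst hτ₁
      have : lb m τ ≤ x m τ + s ∧ x m τ + s ≤ ub m τ := ⟨by linarith, h₁⟩
      simpa [ht] using this
    by_cases hτ₂ : τ = t₂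
    · subst hτ₂
      have : lb m τ ≤ x m τ - s ∧ x m τ - s ≤ ub m τ := ⟨h₂, by linarith⟩
      simpa [ht.symm, le_sub_iff_add_le] using this
    simpa [hτ₁, hτ₂] using And.intro hlb hub
  simpa [hm] using And.intro hlb hub

lemma sub_apply_le_of_isMinOn_feasibleSet {E : Fin N → ℝ} {lb ub x y : Fin N → Fin T → ℝ}
    (hx : x ∈ feasibleSet E lb ub)
    (hmin : IsMinOn (fun a => frobNorm (a - y)) (feasibleSet E lb ub) x) {n : Fin N}
    {t₁ t₂ : Fin T} (h₁ : x n t₁ < ub n t₁) (h₂ : lb n t₂ < x n t₂) :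
    x n t₂ - y n t₂ ≤ x n t₁ - y n t₁ := by
  rcases eq_or_ne t₁ t₂ with rfl | ht
  · rfl
  have hdir := frobInner_nonneg_of_forall_frobNorm_le (d := x - y)
    (v := Pi.single n (Pi.single t₁ 1) - Pi.single n (Pi.single t₂ 1))
    (lt_min (sub_pos.2 h₁) (sub_pos.2 h₂)) fun s hs hsδ => by
      have hmem := add_smul_single_sub_single_mem_feasibleSet hx ht hs.le
        (by linarith [min_le_left (ub n t₁ - x n t₁) (x n t₂ - lb n t₂)])
        (by linarith [min_le_right (ub n t₁ - x n t₁) (x n t₂ - lb n t₂)])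
      simpa [add_sub_right_comm] using isMinOn_iff.1 hmin _ hmem
  simpa [frobInner_sub, frobInner_single] using hdir

lemma colSum_sub_eq_mul {x y : Fin N → Fin T → ℝ} {p : Fin T → ℝ} (hy : y ∈ profileSet p)
    (hcol : ∀ n m t, x n t - y n t = x m t - y m t) (n : Fin N) (t : Fin T) :
    ∑ m, x m t - p t = N * (x n t - y n t) := by
  rw [← hy t, ← sum_sub_distrib, sum_congr rfl fun m _ => hcol m n t]
  simp [mul_sub]

lemma exists_colSum_lt {E : Fin N → ℝ} {lb ub x : Fin N → Fin T → ℝ} {p : Fin T → ℝ}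
    (hx : x ∈ feasibleSet E lb ub) (hpE : ∑ t, p t = ∑ n, E n) (hxp : x ∉ profileSet p) :
    ∃ t, ∑ n, x n t < p t := by
  by_contra! hle
  refine hxp fun t => ?_
  have hsum : ∑ t, p t = ∑ t, ∑ n, x n t := by
    rw [hpE, sum_comm]
    exact sum_congr rfl fun n _ => (hx n).1.symm
  exact ((sum_eq_sum_iff_of_le fun t _ => hle t).1 hsum t (mem_univ t)).symm

end Matrices

section Rows

variable {κ : Type*} [Fintype κ] [DecidableEq κ] {ℓ lb ub w : κ → ℝ} {S : Finset κ}

lemma eq_ub_or_eq_lb_of_exchange (hbox : ∀ t, lb t ≤ ℓ t ∧ ℓ t ≤ ub t)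
    (hS : ∀ t, t ∈ S ↔ w t < 0)
    (hexch : ∀ t₁ t₂, ℓ t₁ < ub t₁ → lb t₂ < ℓ t₂ → w t₂ ≤ w t₁) :
    (∀ t ∈ S, ℓ t = ub t) ∨ ∀ t ∉ S, ℓ t = lb t := by
  by_contra! ⟨⟨t₁, ht₁, hne₁⟩, t₂, ht₂, hne₂⟩
  have := hexch t₁ t₂ ((hbox t₁).2.lt_of_ne hne₁) ((hbox t₂).1.lt_of_ne' hne₂)
  rw [hS] at ht₁ ht₂
  linarith

lemma sum_eq_ite_of_eq_ub_or_eq_lb {e : ℝ} (hsum : ∑ t, ℓ t = e)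
    (hbox : ∀ t, lb t ≤ ℓ t ∧ ℓ t ≤ ub t) (h : (∀ t ∈ S, ℓ t = ub t) ∨ ∀ t ∉ S, ℓ t = lb t) :
    ∑ t ∈ S, ℓ t = if e < ∑ t ∈ Sᶜ, lb t + ∑ t ∈ S, ub t then e - ∑ t ∈ Sᶜ, lb t
      else ∑ t ∈ S, ub t := by
  have hsplit := sum_add_sum_compl S ℓ
  have hS : ∑ t ∈ S, ℓ t ≤ ∑ t ∈ S, ub t := sum_le_sum fun t _ => (hbox t).2
  have hSc : ∑ t ∈ Sᶜ, lb t ≤ ∑ t ∈ Sᶜ, ℓ t := sum_le_sum fun t _ => (hbox t).1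
  rcases h with h | h
  · have := sum_congr rfl h
    split_ifs <;> linarith
  · have := sum_congr rfl fun t ht => h t (mem_compl.1 ht)
    split_ifs <;> linarith

end Rows

lemma hoffman_cut_eq_sum {ι κ : Type*} [Fintype ι] [Fintype κ] [DecidableEq ι] [DecidableEq κ]
    (E : ι → ℝ) (p : κ → ℝ) (lb ub x : ι → κ → ℝ) (S : Finset κ) (R : Finset ι)
    (hrow : ∀ n, ∑ t ∈ S, x n t = if n ∈ R then E n - ∑ t ∈ Sᶜ, lb n t else ∑ t ∈ S, ub n t) :
    (∑ n ∈ R, E n) - (∑ t ∈ S, p t) + (∑ t ∈ S, ∑ n ∈ Rᶜ, ub n t)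
      - (∑ t ∈ Sᶜ, ∑ n ∈ R, lb n t) = ∑ t ∈ S, (∑ n, x n t - p t) := by
  have hx : ∑ t ∈ S, ∑ n, x n t
      = ∑ n ∈ R, (E n - ∑ t ∈ Sᶜ, lb n t) + ∑ n ∈ Rᶜ, ∑ t ∈ S, ub n t := by
    rw [sum_comm, ← sum_add_sum_compl R]
    congr 1 <;> refine sum_congr rfl fun n hn => ?_ <;> simp_all
  rw [sum_sub_distrib, hx, sum_sub_distrib, sum_comm (s := Sᶜ), sum_comm (s := S) (t := Rᶜ)]
  ring

theorem violated_hoffman_cut_general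
    (N T : ℕ)
    (E : Fin N → ℝ) (lb ub : Fin N → Fin T → ℝ)
    (p : Fin T → ℝ) (hpE : (∑ t, p t) = ∑ n, E n)
    (X : Set (Fin N → Fin T → ℝ))
    (hXdef : X = {ℓ | ∀ n, (∑ t, ℓ n t) = E n ∧ ∀ t, lb n t ≤ ℓ n t ∧ ℓ n t ≤ ub n t})
    (Y : Set (Fin N → Fin T → ℝ))
    (hYdef : Y = {z | ∀ t, (∑ n, z n t) = p t})
    (hdisjoint : X ∩ Y = ∅)
    (xinf yinf : Fin N → Fin T → ℝ)
    (hxinfX : xinf ∈ X) (hyinfY : yinf ∈ Y)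
    (hclosest : frobNorm (xinf - yinf)
      = sInf {d : ℝ | ∃ a ∈ X, ∃ b ∈ Y, d = frobNorm (a - b)})
    (T0 : Finset (Fin T))
    (hT0 : T0 = univ.filter fun t => (∑ n, xinf n t) < p t)
    (N0 : Finset (Fin N))
    (hN0 : N0 = univ.filter fun n =>
      E n < (∑ t ∈ T0ᶜ, lb n t) + ∑ t ∈ T0, ub n t) :
    (∑ n ∈ N0, E n) - (∑ t ∈ T0, p t)
        + (∑ t ∈ T0, ∑ n ∈ N0ᶜ, ub n t)
        - (∑ t ∈ T0ᶜ, ∑ n ∈ N0, lb n t) < 0 := by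
  subst hXdef hYdef
  have hdist : ∀ a ∈ feasibleSet E lb ub, ∀ b ∈ profileSet p,
      frobNorm (xinf - yinf) ≤ frobNorm (a - b) := fun a ha b hb =>
    hclosest ▸ csInf_le ⟨0, by rintro _ ⟨a, -, b, -, rfl⟩; exact frobNorm_nonneg _⟩
      ⟨a, ha, b, hb, rfl⟩
  have hprojX : IsMinOn (fun a => frobNorm (a - yinf)) (feasibleSet E lb ub) xinf :=
    isMinOn_iff.2 fun a ha => hdist a ha _ hyinfY
  have hprojY : IsMinOn (fun b => frobNorm (xinf - b)) (profileSet p) yinf :=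
    isMinOn_iff.2 fun b hb => hdist _ hxinfX b hb
  have hcol := sub_apply_eq_of_isMinOn_profileSet hyinfY hprojY
  have hsign : ∀ n t, t ∈ T0 ↔ xinf n t - yinf n t < 0 := fun n t => by
    rw [hT0, mem_filter, ← sub_neg, colSum_sub_eq_mul hyinfY hcol n t]
    simp [mul_neg_iff, n.pos]
  have hrow (n : Fin N) : ∑ t ∈ T0, xinf n t
      = if n ∈ N0 then E n - ∑ t ∈ T0ᶜ, lb n t else ∑ t ∈ T0, ub n t := by
    obtain ⟨hsum, hbox⟩ := hxinfX n
    have hexch (t₁ t₂ : Fin T) := sub_apply_le_of_isMinOn_feasibleSet (n := n) (t₁ := t₁)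
      (t₂ := t₂) hxinfX hprojX
    simp only [hN0, mem_filter, mem_univ, true_and]
    exact sum_eq_ite_of_eq_ub_or_eq_lb hsum hbox
      (eq_ub_or_eq_lb_of_exchange hbox (hsign n) hexch)
  obtain ⟨t, ht⟩ := exists_colSum_lt hxinfX hpE fun h => hdisjoint.subset ⟨hxinfX, h⟩
  rw [hoffman_cut_eq_sum E p lb ub xinf T0 N0 hrow]
  exact sum_neg (fun t ht => by simpa [hT0] using ht) ⟨t, by simpa [hT0] using ht⟩

/-- **Violated Hoffman cut from the APM limit orbit.**
Under the closest-pair setup with `X ∩ Y_p = ∅` and assuming `Σ_t p_t = Σ_n E_n`,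
the pair `(T₀, N₀)` defines a Hoffman cut violated by `p`:
`Σ_{n∈N₀} E_n − Σ_{t∈T₀} p_t + Σ_{t∈T₀, n∉N₀} x̄_{n,t} − Σ_{t∉T₀, n∈N₀} x̲_{n,t} < 0`. -/
theorem violated_hoffman_cut
    (N T : ℕ) (hN : 0 < N) (hT : 0 < T)
    (E : Fin N → ℝ) (lb ub : Fin N → Fin T → ℝ)
    (hbounds : ∀ n t, lb n t ≤ ub n t)
    (hXn_nonempty : ∀ n, (∑ t, lb n t) ≤ E n ∧ E n ≤ ∑ t, ub n t)
    (p : Fin T → ℝ) (hpE : (∑ t, p t) = ∑ n, E n)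
    (X : Set (Fin N → Fin T → ℝ))
    (hXdef : X = {ℓ | ∀ n, (∑ t, ℓ n t) = E n ∧ ∀ t, lb n t ≤ ℓ n t ∧ ℓ n t ≤ ub n t})
    (Y : Set (Fin N → Fin T → ℝ))
    (hYdef : Y = {z | ∀ t, (∑ n, z n t) = p t})
    (hdisjoint : X ∩ Y = ∅)
    (xinf yinf : Fin N → Fin T → ℝ)
    (hxinfX : xinf ∈ X) (hyinfY : yinf ∈ Y)
    (hclosest : frobNorm (xinf - yinf)
      = sInf {d : ℝ | ∃ a ∈ X, ∃ b ∈ Y, d = frobNorm (a - b)})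
    (T0 : Finset (Fin T))
    (hT0 : T0 = univ.filter fun t => (∑ n, xinf n t) < p t)
    (N0 : Finset (Fin N))
    (hN0 : N0 = univ.filter fun n =>
      E n < (∑ t ∈ T0ᶜ, lb n t) + ∑ t ∈ T0, ub n t) :
    (∑ n ∈ N0, E n) - (∑ t ∈ T0, p t)
        + (∑ t ∈ T0, ∑ n ∈ N0ᶜ, ub n t)
        - (∑ t ∈ T0ᶜ, ∑ n ∈ N0, lb n t) < 0 :=
  violated_hoffman_cut_general N T E lb ub p hpE X hXdef Y hYdef hdisjoint xinf yinf hxinfX hyinfY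
    hclosest T0 hT0 N0 hN0
end

section
/- (Aggregate form of the violated cut.) Under the closest-pair setup with X ∩ Y_p = ∅ and assuming Σ_t p_t = Σ_n E_n, setting A_{T₀} = Σ_{t∈T₀} Σ_n x^∞_{n,t}, one has A_{T₀} < Σ_{t∈T₀} p_t. -/
open Finset

theorem Finset.sum_filter_lt_lt_sum_filter_of_sum_eq {ι M : Type*}
    [AddCommMonoid M] [LinearOrder M] [IsOrderedCancelAddMonoid M]
    {s : Finset ι} {f g : ι → M} (hsum : ∑ i ∈ s, f i = ∑ i ∈ s, g i)
    (hne : ∃ i ∈ s, f i ≠ g i) :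
    ∑ i ∈ s with f i < g i, f i < ∑ i ∈ s with f i < g i, g i := by
  have hnonempty : {i ∈ s | f i < g i}.Nonempty := by
    by_contra hempty
    rw [not_nonempty_iff_eq_empty, filter_eq_empty_iff] at hempty
    have hge : ∀ i ∈ s, g i ≤ f i := fun i hi => not_lt.mp (hempty hi)
    obtain ⟨i, hi, hfg⟩ := hne
    exact hfg ((sum_eq_sum_iff_of_le hge).mp hsum.symm i hi).symm
  exact sum_lt_sum_of_nonempty hnonempty fun i hi => (mem_filter.mp hi).2

theorem aggregate_violated_cut_general
    (N T : ℕ)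
    (E : Fin N → ℝ) (lb ub : Fin N → Fin T → ℝ)
    (p : Fin T → ℝ) (hpE : (∑ t, p t) = ∑ n, E n)
    (X : Set (Fin N → Fin T → ℝ))
    (hXdef : X = {ℓ | ∀ n, (∑ t, ℓ n t) = E n ∧ ∀ t, lb n t ≤ ℓ n t ∧ ℓ n t ≤ ub n t})
    (Y : Set (Fin N → Fin T → ℝ))
    (hYdef : Y = {z | ∀ t, (∑ n, z n t) = p t})
    (hdisjoint : X ∩ Y = ∅)
    (xinf : Fin N → Fin T → ℝ)
    (hxinfX : xinf ∈ X)
    (T0 : Finset (Fin T))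
    (hT0 : T0 = univ.filter fun t => (∑ n, xinf n t) < p t) :
    (∑ t ∈ T0, ∑ n, xinf n t) < ∑ t ∈ T0, p t := by
  subst hXdef hYdef hT0
  refine sum_filter_lt_lt_sum_filter_of_sum_eq ?_ ?_
  · rw [sum_comm, hpE]
    exact sum_congr rfl fun n _ => (hxinfX n).1
  · by_contra! hxinfY
    exact Set.eq_empty_iff_forall_notMem.mp hdisjoint xinf
      ⟨hxinfX, fun t => hxinfY t (mem_univ t)⟩

/-- **Aggregate form of the violated cut.**
Under the closest-pair setup with `X ∩ Y_p = ∅` and assuming `Σ_t p_t = Σ_n E_n`,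
setting `A_{T₀} = Σ_{t∈T₀} Σ_n x^∞_{n,t}`, one has `A_{T₀} < Σ_{t∈T₀} p_t`. -/
theorem aggregate_violated_cut
    (N T : ℕ) (hN : 0 < N) (hT : 0 < T)
    (E : Fin N → ℝ) (lb ub : Fin N → Fin T → ℝ)
    (hbounds : ∀ n t, lb n t ≤ ub n t)
    (hXn_nonempty : ∀ n, (∑ t, lb n t) ≤ E n ∧ E n ≤ ∑ t, ub n t)
    (p : Fin T → ℝ) (hpE : (∑ t, p t) = ∑ n, E n)
    (X : Set (Fin N → Fin T → ℝ))
    (hXdef : X = {ℓ | ∀ n, (∑ t, ℓ n t) = E n ∧ ∀ t, lb n t ≤ ℓ n t ∧ ℓ n t ≤ ub n t})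
    (Y : Set (Fin N → Fin T → ℝ))
    (hYdef : Y = {z | ∀ t, (∑ n, z n t) = p t})
    (hdisjoint : X ∩ Y = ∅)
    (xinf yinf : Fin N → Fin T → ℝ)
    (hxinfX : xinf ∈ X) (hyinfY : yinf ∈ Y)
    (hclosest : frobNorm (xinf - yinf)
      = sInf {d : ℝ | ∃ a ∈ X, ∃ b ∈ Y, d = frobNorm (a - b)})
    (T0 : Finset (Fin T))
    (hT0 : T0 = univ.filter fun t => (∑ n, xinf n t) < p t)
    (N0 : Finset (Fin N))
    (hN0 : N0 = univ.filter fun n =>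
      E n < (∑ t ∈ T0ᶜ, lb n t) + ∑ t ∈ T0, ub n t) :
    (∑ t ∈ T0, ∑ n, xinf n t) < ∑ t ∈ T0, p t :=
  aggregate_violated_cut_general N T E lb ub p hpE X hXdef Y hYdef hdisjoint xinf hxinfX T0 hT0
end

section
/- (Saturation at upper bounds.) Under the closest-pair setup with X ∩ Y_p = ∅, for every t ∈ T₀ and every n ∉ N₀ one has y^∞_{n,t} ≥ x̄_{n,t} and x^∞_{n,t} = x̄_{n,t}. -/
open Finset

/-- **Saturation at upper bounds.**
Under the closest-pair setup with `X ∩ Y_p = ∅`, for every `t ∈ T0` and every `n ∉ N0`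
one has `y^∞_{n,t} ≥ x̄_{n,t}` and `x^∞_{n,t} = x̄_{n,t}`. -/
theorem saturation_upper_bounds
    (N T : ℕ) (hN : 0 < N) (hT : 0 < T)
    (E : Fin N → ℝ) (lb ub : Fin N → Fin T → ℝ)
    (hbounds : ∀ n t, lb n t ≤ ub n t)
    (hXn_nonempty : ∀ n, (∑ t, lb n t) ≤ E n ∧ E n ≤ ∑ t, ub n t)
    (p : Fin T → ℝ)
    (X : Set (Fin N → Fin T → ℝ))
    (hXdef : X = {ℓ | ∀ n, (∑ t, ℓ n t) = E n ∧ ∀ t, lb n t ≤ ℓ n t ∧ ℓ n t ≤ ub n t})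
    (Y : Set (Fin N → Fin T → ℝ))
    (hYdef : Y = {z | ∀ t, (∑ n, z n t) = p t})
    (hdisjoint : X ∩ Y = ∅)
    (xinf yinf : Fin N → Fin T → ℝ)
    (hxinfX : xinf ∈ X) (hyinfY : yinf ∈ Y)
    (hclosest : frobNorm (xinf - yinf)
      = sInf {d : ℝ | ∃ a ∈ X, ∃ b ∈ Y, d = frobNorm (a - b)})
    (T0 : Finset (Fin T))
    (hT0 : T0 = univ.filter fun t => (∑ n, xinf n t) < p t)
    (N0 : Finset (Fin N))
    (hN0 : N0 = univ.filter fun n =>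
      E n < (∑ t ∈ T0ᶜ, lb n t) + ∑ t ∈ T0, ub n t) :
    ∀ t ∈ T0, ∀ n ∉ N0, ub n t ≤ yinf n t ∧ xinf n t = ub n t := by
  have hNpos : (0:ℝ) < N := Nat.cast_pos.mpr hN
  -- basic facts about xinf, yinf
  have hxinfX' := hxinfX
  rw [hXdef] at hxinfX'
  have hxsum : ∀ m, ∑ u, xinf m u = E m := fun m => (hxinfX' m).1
  have hxlb : ∀ m u, lb m u ≤ xinf m u := fun m u => ((hxinfX' m).2 u).1
  have hxub : ∀ m u, xinf m u ≤ ub m u := fun m u => ((hxinfX' m).2 u).2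
  have hyinfY' := hyinfY
  rw [hYdef] at hyinfY'
  have hysum : ∀ u, ∑ m, yinf m u = p u := hyinfY'
  -- the offset
  set c : Fin T → ℝ := fun u => (p u - ∑ m, xinf m u) / N with hc
  -- distance set facts
  have hbdd : BddBelow {d : ℝ | ∃ a ∈ X, ∃ b ∈ Y, d = frobNorm (a - b)} := by
    refine ⟨0, ?_⟩
    rintro d ⟨a, _, b, _, rfl⟩
    exact Real.sqrt_nonneg _
  have hinf_le : ∀ a ∈ X, ∀ b ∈ Y, frobNorm (xinf - yinf) ≤ frobNorm (a - b) := by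
    intro a ha b hb
    rw [hclosest]
    exact csInf_le hbdd ⟨a, ha, b, hb, rfl⟩
  -- sum-of-squares comparison from frobNorm comparison
  have hfrob_sq : ∀ a b : Fin N → Fin T → ℝ,
      frobNorm (a - b) = Real.sqrt (∑ m, ∑ u, (a m u - b m u)^2) := by
    intro a b; simp [frobNorm]
  -- the explicit projection of xinf onto Y
  set yh : Fin N → Fin T → ℝ := fun m u => xinf m u + c u with hyh
  have hyhcol : ∀ u, ∑ m, yh m u = p u := by
    intro u
    have : ∑ m, yh m u = (∑ m, xinf m u) + N * c u := by
      simp [yh, Finset.sum_add_distrib, Finset.card_univ, mul_comm]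
    rw [this, hc]
    field_simp
    ring
  have hyhY : yh ∈ Y := by rw [hYdef]; exact hyhcol
  -- orthogonal decomposition
  have hdecomp : ∀ b ∈ Y, ∑ m, ∑ u, (xinf m u - b m u)^2
      = (∑ m, ∑ u, (xinf m u - yh m u)^2) + ∑ m, ∑ u, (yh m u - b m u)^2 := by
    intro b hb
    rw [hYdef] at hb
    have hbu : ∀ u, ∑ m, b m u = p u := hb
    rw [Finset.sum_comm, Finset.sum_comm (f := fun m u => (xinf m u - yh m u)^2),
      Finset.sum_comm (f := fun m u => (yh m u - b m u)^2), ← Finset.sum_add_distrib]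
    refine Finset.sum_congr rfl ?_
    intro u _
    have hsumdiff : ∑ m, (yh m u - b m u) = 0 := by
      rw [Finset.sum_sub_distrib, hyhcol u, hbu u, sub_self]
    have expand : ∀ m, (xinf m u - b m u)^2
        = (xinf m u - yh m u)^2 + (yh m u - b m u)^2 + (-2 * c u) * (yh m u - b m u) := by
      intro m; simp only [yh]; ring
    rw [Finset.sum_congr rfl (fun m _ => expand m), Finset.sum_add_distrib,
      Finset.sum_add_distrib, ← Finset.mul_sum, hsumdiff, mul_zero, add_zero]
  -- yinf equals yh
  have hle1 : frobNorm (xinf - yinf) ≤ frobNorm (xinf - yh) :=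
    hinf_le xinf hxinfX yh hyhY
  have hsq_le : ∑ m, ∑ u, (xinf m u - yinf m u)^2 ≤ ∑ m, ∑ u, (xinf m u - yh m u)^2 := by
    rw [hfrob_sq, hfrob_sq] at hle1
    have h2 := mul_self_le_mul_self (Real.sqrt_nonneg _) hle1
    rwa [Real.mul_self_sqrt (by positivity), Real.mul_self_sqrt (by positivity)] at h2
  have hzero : ∑ m, ∑ u, (yh m u - yinf m u)^2 ≤ 0 := by
    have := hdecomp yinf hyinfY
    linarith
  have hy_eq : ∀ m u, yinf m u = xinf m u + c u := by
    have hnn : ∀ m ∈ (univ : Finset (Fin N)), (0:ℝ) ≤ ∑ u, (yh m u - yinf m u)^2 :=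
      fun m _ => Finset.sum_nonneg fun u _ => sq_nonneg _
    have heq0 : ∑ m, ∑ u, (yh m u - yinf m u)^2 = 0 :=
      le_antisymm hzero (Finset.sum_nonneg hnn)
    intro m u
    have h1 := (Finset.sum_eq_zero_iff_of_nonneg hnn).mp heq0 m (mem_univ m)
    have h2 := (Finset.sum_eq_zero_iff_of_nonneg (fun u _ => sq_nonneg _)).mp h1 u (mem_univ u)
    have h3 : yh m u - yinf m u = 0 := by
      have := sq_eq_zero_iff.mp h2
      exact this
    have : yh m u = xinf m u + c u := rfl
    linarith
  -- start main argument
  subst hT0 hN0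
  intro t ht n hn
  have htT0 : (∑ m, xinf m t) < p t := by
    simpa using ht
  have hct : 0 < c t := by
    rw [hc]
    exact div_pos (by linarith) hNpos
  have hnN0 : (∑ u ∈ (univ.filter fun t => (∑ n, xinf n t) < p t)ᶜ, lb n u)
      + ∑ u ∈ (univ.filter fun t => (∑ n, xinf n t) < p t), ub n u ≤ E n := by
    have := hn
    simp only [Finset.mem_filter, Finset.mem_univ, true_and, not_lt] at this
    exact this
  have hmain : xinf n t = ub n t := by
    by_contra hne
    have hlt : xinf n t < ub n t := lt_of_le_of_ne (hxub n t) hne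
    -- on the complement of T0, xinf n is at lower bound
    have hlb_eq : ∀ u ∈ (univ.filter fun t => (∑ n, xinf n t) < p t)ᶜ, xinf n u = lb n u := by
      intro u hu
      by_contra hne'
      have hgt : lb n u < xinf n u := lt_of_le_of_ne (hxlb n u) (Ne.symm hne')
      have hu' : ¬ ((∑ m, xinf m u) < p u) := by
        simpa using hu
      have hcu : c u ≤ 0 := by
        rw [hc]
        exact div_nonpos_of_nonpos_of_nonneg (by push_neg at hu'; linarith) (le_of_lt hNpos)
      have hut : u ≠ t := by
        intro h; subst h; exact hu' htT0
      set ε := min (ub n t - xinf n t) (min (xinf n u - lb n u) (c t / 2)) with hεdef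
      have hεpos : 0 < ε :=
        lt_min (by linarith) (lt_min (by linarith) (by linarith))
      have hε1 : ε ≤ ub n t - xinf n t := min_le_left _ _
      have hε2 : ε ≤ xinf n u - lb n u := le_trans (min_le_right _ _) (min_le_left _ _)
      have hε3 : ε ≤ c t / 2 := le_trans (min_le_right _ _) (min_le_right _ _)
      -- perturbed point
      set x' : Fin N → Fin T → ℝ := fun m v =>
        if m = n then (if v = t then xinf n t + ε else if v = u then xinf n u - ε else xinf m v)
        else xinf m v with hx'def
      have hx'n : ∀ v, x' n v = xinf n v + (if v = t then ε else 0) - (if v = u then ε else 0) := by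
        intro v
        by_cases hv : v = t
        · rw [hv]
          simp [x', (Ne.symm hut)]
        · by_cases hv' : v = u
          · rw [hv']
            simp [x', hut]
          · simp [x', hv, hv']
      have hx'm : ∀ m, m ≠ n → ∀ v, x' m v = xinf m v := by
        intro m hm v; simp [x', hm]
      have hx'X : x' ∈ X := by
        rw [hXdef]
        intro m
        constructor
        · by_cases hm : m = n
          · rw [hm]
            rw [Finset.sum_congr rfl (fun v _ => hx'n v)]
            rw [Finset.sum_sub_distrib, Finset.sum_add_distrib,
              Finset.sum_ite_eq' univ t (fun _ => ε), Finset.sum_ite_eq' univ u (fun _ => ε)]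
            simp [hxsum n]
          · rw [Finset.sum_congr rfl (fun v _ => hx'm m hm v)]
            exact hxsum m
        · intro v
          by_cases hm : m = n
          · rw [hm, hx'n v]
            by_cases hv : v = t
            · rw [hv]
              simp only [if_pos rfl, if_neg (Ne.symm hut), if_true, eq_self_iff_true, sub_zero]
              constructor
              · have := hxlb n t; linarith
              · linarith
            · by_cases hv' : v = u
              · rw [hv']
                simp only [if_neg hut, if_pos rfl, if_true, eq_self_iff_true, zero_add, add_zero]
                constructor
                · linarith
                · have := hxub n u; linarith
              · simp only [if_neg hv, if_neg hv']
                exact ⟨by have := hxlb n v; linarith, by have := hxub n v; linarith⟩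
          · rw [hx'm m hm v]
            exact ⟨hxlb m v, hxub m v⟩
      -- distance strictly decreases
      have hpt : ∀ m v, (x' m v - yinf m v)^2 = (xinf m v - yinf m v)^2
          + ((if m = n ∧ v = t then ((ε - c t)^2 - (c t)^2) else 0)
            + (if m = n ∧ v = u then ((-ε - c u)^2 - (c u)^2) else 0)) := by
        intro m v
        by_cases hm : m = n
        · by_cases hv : v = t
          · rw [hm, hv, hx'n t, hy_eq n t]
            rw [if_pos rfl, if_neg (Ne.symm hut), if_pos ⟨rfl, rfl⟩,
              if_neg (by rintro ⟨-, h⟩; exact hut h.symm)]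
            ring
          · by_cases hv' : v = u
            · rw [hm, hv', hx'n u, hy_eq n u]
              rw [if_neg hut, if_pos rfl,
                if_neg (by rintro ⟨-, h⟩; exact hut h), if_pos ⟨rfl, rfl⟩]
              ring
            · rw [hm, hx'n v, hy_eq n v]
              rw [if_neg hv, if_neg hv',
                if_neg (by rintro ⟨-, h⟩; exact hv h), if_neg (by rintro ⟨-, h⟩; exact hv' h)]
              ring
        · rw [hx'm m hm v]
          rw [if_neg (by rintro ⟨h, -⟩; exact hm h), if_neg (by rintro ⟨h, -⟩; exact hm h)]
          ring
      have hsumif : ∀ (A B : ℝ), (∑ m, ∑ v, ((if m = n ∧ v = t then A else 0)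
          + (if m = n ∧ v = u then B else 0))) = A + B := by
        intro A B
        have hrow : ∀ m, (∑ v, ((if m = n ∧ v = t then A else 0)
            + (if m = n ∧ v = u then B else 0))) = if m = n then A + B else 0 := by
          intro m
          by_cases hm : m = n
          · rw [hm]
            simp only [true_and, Finset.sum_add_distrib,
              Finset.sum_ite_eq' univ t (fun _ => A), Finset.sum_ite_eq' univ u (fun _ => B)]
            simp
          · simp [hm]
        rw [Finset.sum_congr rfl (fun m _ => hrow m),
          Finset.sum_ite_eq' univ n (fun _ => A + B)]
        simp
      have hsum' : ∑ m, ∑ v, (x' m v - yinf m v)^2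
          = (∑ m, ∑ v, (xinf m v - yinf m v)^2) + (2*ε*(ε - c t + c u)) := by
        rw [Finset.sum_congr rfl (fun m _ => Finset.sum_congr rfl (fun v _ => hpt m v))]
        rw [show (∑ m, ∑ v, ((xinf m v - yinf m v)^2
            + ((if m = n ∧ v = t then ((ε - c t)^2 - (c t)^2) else 0)
              + (if m = n ∧ v = u then ((-ε - c u)^2 - (c u)^2) else 0))))
          = (∑ m, ∑ v, (xinf m v - yinf m v)^2)
            + ∑ m, ∑ v, ((if m = n ∧ v = t then ((ε - c t)^2 - (c t)^2) else 0)
              + (if m = n ∧ v = u then ((-ε - c u)^2 - (c u)^2) else 0)) by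
            rw [← Finset.sum_add_distrib]
            refine Finset.sum_congr rfl fun m _ => ?_
            rw [← Finset.sum_add_distrib]]
        rw [hsumif]
        ring
      have hneg : 2*ε*(ε - c t + c u) < 0 := by nlinarith
      have hlt2 : ∑ m, ∑ v, (x' m v - yinf m v)^2 < ∑ m, ∑ v, (xinf m v - yinf m v)^2 := by
        rw [hsum']; linarith
      have hfroblt : frobNorm (x' - yinf) < frobNorm (xinf - yinf) := by
        rw [hfrob_sq, hfrob_sq]
        exact Real.sqrt_lt_sqrt (by positivity) hlt2
      have := hinf_le x' hx'X yinf hyinfY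
      linarith
    -- sum contradiction: n would be in N0
    have h1 : ∑ u ∈ (univ.filter fun t => (∑ n, xinf n t) < p t)ᶜ, xinf n u
        = ∑ u ∈ (univ.filter fun t => (∑ n, xinf n t) < p t)ᶜ, lb n u :=
      Finset.sum_congr rfl (fun u hu => hlb_eq u hu)
    have h2 : ∑ u ∈ (univ.filter fun t => (∑ n, xinf n t) < p t), xinf n u
        < ∑ u ∈ (univ.filter fun t => (∑ n, xinf n t) < p t), ub n u :=
      Finset.sum_lt_sum (fun u _ => hxub n u) ⟨t, ht, hlt⟩
    have h3 : (∑ u ∈ (univ.filter fun t => (∑ n, xinf n t) < p t)ᶜ, xinf n u)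
        + ∑ u ∈ (univ.filter fun t => (∑ n, xinf n t) < p t), xinf n u = E n := by
      rw [Finset.sum_compl_add_sum]
      exact hxsum n
    linarith
  refine ⟨?_, hmain⟩
  have hyv := hy_eq n t
  rw [hyv, hmain]
  linarith
end

section
/- (Saturation at lower bounds.) Under the closest-pair setup with X ∩ Y_p = ∅, for every t ∉ T₀ and every n ∈ N₀ one has x^∞_{n,t} = x̲_{n,t}. -/
open Finset

/-- **Saturation at lower bounds.**
Under the closest-pair setup with `X ∩ Y_p = ∅`, for every `t ∉ T₀` and every `n ∈ N₀`
one has `x^∞_{n,t} = x̲_{n,t}`. -/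
theorem saturation_lower_bounds
    (N T : ℕ) (hN : 0 < N) (hT : 0 < T)
    (E : Fin N → ℝ) (lb ub : Fin N → Fin T → ℝ)
    (hbounds : ∀ n t, lb n t ≤ ub n t)
    (hXn_nonempty : ∀ n, (∑ t, lb n t) ≤ E n ∧ E n ≤ ∑ t, ub n t)
    (p : Fin T → ℝ)
    (X : Set (Fin N → Fin T → ℝ))
    (hXdef : X = {ℓ | ∀ n, (∑ t, ℓ n t) = E n ∧ ∀ t, lb n t ≤ ℓ n t ∧ ℓ n t ≤ ub n t})
    (Y : Set (Fin N → Fin T → ℝ))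
    (hYdef : Y = {z | ∀ t, (∑ n, z n t) = p t})
    (hdisjoint : X ∩ Y = ∅)
    (xinf yinf : Fin N → Fin T → ℝ)
    (hxinfX : xinf ∈ X) (hyinfY : yinf ∈ Y)
    (hclosest : frobNorm (xinf - yinf)
      = sInf {d : ℝ | ∃ a ∈ X, ∃ b ∈ Y, d = frobNorm (a - b)})
    (T0 : Finset (Fin T))
    (hT0 : T0 = univ.filter fun t => (∑ n, xinf n t) < p t)
    (N0 : Finset (Fin N))
    (hN0 : N0 = univ.filter fun n =>
      E n < (∑ t ∈ T0ᶜ, lb n t) + ∑ t ∈ T0, ub n t) :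
    ∀ t ∉ T0, ∀ n ∈ N0, xinf n t = lb n t := by
  have hNR : (0:ℝ) < (N:ℝ) := by exact_mod_cast hN
  -- the objective
  set f : (Fin N → Fin T → ℝ) → ℝ := fun x => ∑ s, (p s - ∑ m, x m s) ^ 2 with hf
  have hf_nonneg : ∀ x, 0 ≤ f x := fun x => Finset.sum_nonneg fun s _ => sq_nonneg _
  -- closest-pair implies xinf minimizes f over X
  have hmin : ∀ x ∈ X, f xinf ≤ f x := by
    intro x hxX
    have hbdd : BddBelow {d : ℝ | ∃ a ∈ X, ∃ b ∈ Y, d = frobNorm (a - b)} := by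
      refine ⟨0, ?_⟩
      rintro d ⟨a, -, b, -, rfl⟩
      exact Real.sqrt_nonneg _
    set Py : Fin N → Fin T → ℝ := fun m s => x m s + (p s - ∑ m', x m' s) / N with hPy
    have hPyY : Py ∈ Y := by
      rw [hYdef]
      intro s
      simp only [hPy, Finset.sum_add_distrib, Finset.sum_const, Finset.card_univ,
        Fintype.card_fin, nsmul_eq_mul]
      field_simp
      ring
    have hnorm : frobNorm (x - Py) = Real.sqrt (f x / N) := by
      unfold frobNorm
      congr 1
      have hentry : ∀ m s, ((x - Py) m s) ^ 2 = (p s - ∑ m', x m' s) ^ 2 / N ^ 2 := by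
        intro m s
        have h1 : (x - Py) m s = -((p s - ∑ m', x m' s) / N) := by
          simp only [Pi.sub_apply, hPy]; ring
        rw [h1, neg_sq, div_pow]
      simp only [hentry]
      rw [Finset.sum_comm, hf, Finset.sum_div]
      refine Finset.sum_congr rfl fun s _ => ?_
      rw [Finset.sum_const, Finset.card_univ, Fintype.card_fin, nsmul_eq_mul]
      field_simp
    have hle1 : sInf {d : ℝ | ∃ a ∈ X, ∃ b ∈ Y, d = frobNorm (a - b)}
        ≤ Real.sqrt (f x / N) := by
      apply csInf_le hbdd
      exact ⟨x, hxX, Py, hPyY, hnorm.symm⟩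
    have hge : Real.sqrt (f xinf / N) ≤ frobNorm (xinf - yinf) := by
      unfold frobNorm
      apply Real.sqrt_le_sqrt
      rw [div_le_iff₀ hNR, Finset.sum_comm, mul_comm, Finset.mul_sum, hf]
      refine Finset.sum_le_sum fun s _ => ?_
      have hcs := sq_sum_le_card_mul_sum_sq (s := (univ : Finset (Fin N)))
        (f := fun m => (xinf - yinf) m s)
      simp only [Finset.card_univ, Fintype.card_fin] at hcs
      have hsum : ∑ m, (xinf - yinf) m s = (∑ m, xinf m s) - p s := by
        rw [hYdef] at hyinfY
        simp [Pi.sub_apply, Finset.sum_sub_distrib, hyinfY s]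
      rw [hsum] at hcs
      calc (p s - ∑ m, xinf m s) ^ 2 = ((∑ m, xinf m s) - p s) ^ 2 := by ring
        _ ≤ (N:ℝ) * ∑ m, ((xinf - yinf) m s) ^ 2 := hcs
    have hch : Real.sqrt (f xinf / N) ≤ Real.sqrt (f x / N) := by
      calc Real.sqrt (f xinf / N) ≤ frobNorm (xinf - yinf) := hge
        _ = _ := hclosest
        _ ≤ Real.sqrt (f x / N) := hle1
    have h2 := (Real.sqrt_le_sqrt_iff (by positivity)).mp hch
    exact (div_le_div_iff_of_pos_right hNR).mp h2
  -- main argument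
  intro t ht n hn
  rw [hN0, Finset.mem_filter] at hn
  have hnE := hn.2
  rw [hXdef] at hxinfX
  have hx := hxinfX n
  by_contra hne
  have hlt : lb n t < xinf n t := lt_of_le_of_ne (hx.2 t).1 (fun h => hne h.symm)
  -- find t' in T0 where xinf is below ub
  have hex : ∃ t' ∈ T0, xinf n t' < ub n t' := by
    by_contra hno
    push_neg at hno
    have heq : ∀ t' ∈ T0, xinf n t' = ub n t' :=
      fun t' ht' => le_antisymm (hx.2 t').2 (hno t' ht')
    have hcontr : (∑ s ∈ T0ᶜ, lb n s) + ∑ s ∈ T0, ub n s ≤ E n := by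
      have e1 : ∑ s ∈ T0ᶜ, lb n s ≤ ∑ s ∈ T0ᶜ, xinf n s :=
        Finset.sum_le_sum fun s _ => (hx.2 s).1
      have e2 : ∑ s ∈ T0, ub n s ≤ ∑ s ∈ T0, xinf n s :=
        Finset.sum_le_sum fun s hs => le_of_eq (heq s hs).symm
      rw [← hx.1, ← Finset.sum_add_sum_compl T0 (fun s => xinf n s)]
      linarith
    exact absurd hnE (not_lt.mpr hcontr)
  obtain ⟨t', ht', hub⟩ := hex
  have htne : t ≠ t' := fun h => ht (h ▸ ht')
  set S : Fin T → ℝ := fun s => ∑ m, xinf m s with hS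
  have hA : p t ≤ S t := by
    rw [hT0] at ht
    simp only [Finset.mem_filter, Finset.mem_univ, true_and, not_lt] at ht
    exact ht
  have hB : S t' < p t' := by
    rw [hT0, Finset.mem_filter] at ht'
    exact ht'.2
  set B : ℝ := p t' - S t' with hBdef
  have hBpos : 0 < B := by simp only [hBdef]; linarith
  set ε : ℝ := min (min (xinf n t - lb n t) (ub n t' - xinf n t')) (B / 2) with hε
  have hεpos : 0 < ε :=
    lt_min (lt_min (by linarith) (by linarith)) (by linarith)
  have hε1 : ε ≤ xinf n t - lb n t := le_trans (min_le_left _ _) (min_le_left _ _)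
  have hε2 : ε ≤ ub n t' - xinf n t' := le_trans (min_le_left _ _) (min_le_right _ _)
  have hε3 : ε ≤ B / 2 := min_le_right _ _
  -- the perturbation
  set c : Fin T → ℝ := fun s => (if s = t then -ε else 0) + (if s = t' then ε else 0)
    with hc
  have hct : c t = -ε := by simp [hc, htne]
  have hct' : c t' = ε := by simp [hc, Ne.symm htne]
  have hc0 : ∀ s, s ≠ t → s ≠ t' → c s = 0 := by
    intro s h1 h2; simp [hc, h1, h2]
  set x' : Fin N → Fin T → ℝ := fun m s => xinf m s + (if m = n then c s else 0) with hx'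
  have hvn : ∀ s, x' n s = xinf n s + c s := by intro s; simp [hx']
  have hvm : ∀ m, m ≠ n → ∀ s, x' m s = xinf m s := by intro m hm s; simp [hx', hm]
  have hcsum : ∑ s, c s = 0 := by
    simp [hc, Finset.sum_add_distrib, Finset.sum_ite_eq', htne]
  have hx'X : x' ∈ X := by
    rw [hXdef]
    intro m
    constructor
    · by_cases hm : m = n
      · subst hm
        simp only [hvn, Finset.sum_add_distrib, hcsum, add_zero]
        exact hx.1
      · simp only [hvm m hm]
        exact (hxinfX m).1
    · intro s
      by_cases hm : m = n
      · subst hm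
        rw [hvn s]
        rcases eq_or_ne s t with hst | hst
        · rw [hst, hct]
          have h1 := (hx.2 t).2
          exact ⟨by linarith, by linarith⟩
        · rcases eq_or_ne s t' with hst' | hst'
          · rw [hst', hct']
            have h1 := (hx.2 t').1
            exact ⟨by linarith, by linarith⟩
          · rw [hc0 s hst hst', add_zero]
            exact hx.2 s
      · rw [hvm m hm s]
        exact (hxinfX m).2 s
  have hcol : ∀ s, ∑ m, x' m s = S s + c s := by
    intro s
    simp [hx', Finset.sum_add_distrib, Finset.sum_ite_eq', hS]
  have hfx' : f x' = f xinf + 2 * ε * (ε + (p t - S t) - B) := by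
    rw [hf]
    simp only [hcol]
    have hsplit : ∀ s, (p s - (S s + c s)) ^ 2
        = (p s - S s) ^ 2 + (c s ^ 2 - 2 * c s * (p s - S s)) := by
      intro s; ring
    simp only [hsplit, Finset.sum_add_distrib, Finset.sum_sub_distrib]
    have h1 : ∑ s, c s ^ 2 = 2 * ε ^ 2 := by
      have hpt : ∀ s, c s ^ 2 = (if s = t then ε ^ 2 else 0)
          + (if s = t' then ε ^ 2 else 0) := by
        intro s
        rcases eq_or_ne s t with hst | hst
        · rw [hst, hct]; simp [htne]
        · rcases eq_or_ne s t' with hst' | hst'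
          · rw [hst', hct']; simp [Ne.symm htne]
          · rw [hc0 s hst hst']; simp [hst, hst']
      simp only [hpt, Finset.sum_add_distrib, Finset.sum_ite_eq']
      simp only [Finset.mem_univ, if_pos]
      ring
    have h2 : ∑ s, 2 * c s * (p s - S s)
        = -2 * ε * (p t - S t) + 2 * ε * (p t' - S t') := by
      have hpt : ∀ s, 2 * c s * (p s - S s)
          = (if s = t then -2 * ε * (p t - S t) else 0)
            + (if s = t' then 2 * ε * (p t' - S t') else 0) := by
        intro s
        rcases eq_or_ne s t with hst | hst
        · rw [hst, hct]; simp [htne]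
        · rcases eq_or_ne s t' with hst' | hst'
          · rw [hst', hct']; simp [Ne.symm htne]
          · rw [hc0 s hst hst']; simp [hst, hst']
      simp only [hpt, Finset.sum_add_distrib, Finset.sum_ite_eq']
      simp only [Finset.mem_univ, if_pos]
    rw [h1, h2, hBdef]
    ring
  have hlt' : f x' < f xinf := by
    rw [hfx']
    have hkey : ε + (p t - S t) - B < 0 := by linarith
    nlinarith [hεpos]
  exact absurd (hmin x' hx'X) (not_le.mpr hlt')
end

section
/- (Validity of Hoffman cuts.) For any subsets T₀ ⊆ {1,…,T} and N₀ ⊆ {1,…,N}, if there exists ℓ ∈ X ∩ Y_p, then Σ_{t∈T₀} p_t ≤ Σ_{n∈N₀} E_n + Σ_{t∈T₀, n∉N₀} x̄_{n,t} − Σ_{t∉T₀, n∈N₀} x̲_{n,t}; in particular every cut added in the non-intrusive optimal disaggregation algorithm is satisfied by every aggregate allocation p admitting a feasible disaggregation. -/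
open Finset

/-! Split the `T₀`-columns of a feasible disaggregation `ℓ` along `N₀`: the `N₀`-block equals the
`N₀`-row sums `Σ_{n∈N₀} E_n` minus the `(T₀ᶜ × N₀)`-block, which is at least `Σ x̲`, and the
`(T₀ × N₀ᶜ)`-block is at most `Σ x̄`. -/

section BlockSums

variable {ι κ M : Type*} [Fintype ι] [Fintype κ] [DecidableEq ι] [DecidableEq κ]

theorem sum_cols_eq_sum_rows_add_sub [AddCommGroup M] (a : ι → κ → M) (s : Finset κ)
    (r : Finset ι) :
    ∑ t ∈ s, ∑ n, a n t
      = ∑ n ∈ r, ∑ t, a n t + ∑ t ∈ s, ∑ n ∈ rᶜ, a n t - ∑ t ∈ sᶜ, ∑ n ∈ r, a n t := by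
  have hcols : ∑ t ∈ s, ∑ n, a n t = ∑ t ∈ s, ∑ n ∈ r, a n t + ∑ t ∈ s, ∑ n ∈ rᶜ, a n t := by
    simp only [← sum_add_distrib, sum_add_sum_compl]
  have hrows : ∑ n ∈ r, ∑ t, a n t = ∑ t ∈ s, ∑ n ∈ r, a n t + ∑ t ∈ sᶜ, ∑ n ∈ r, a n t := by
    rw [sum_comm, sum_add_sum_compl]
  rw [hcols, hrows]
  abel

theorem sum_cols_le_of_bounds [AddCommGroup M] [PartialOrder M] [IsOrderedAddMonoid M]
    (a lb ub : ι → κ → M) (hlb : ∀ n t, lb n t ≤ a n t) (hub : ∀ n t, a n t ≤ ub n t)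
    (s : Finset κ) (r : Finset ι) :
    ∑ t ∈ s, ∑ n, a n t
      ≤ ∑ n ∈ r, ∑ t, a n t + ∑ t ∈ s, ∑ n ∈ rᶜ, ub n t - ∑ t ∈ sᶜ, ∑ n ∈ r, lb n t := by
  rw [sum_cols_eq_sum_rows_add_sub a s r]
  gcongr with t _ n _ t _ n _
  · exact hub n t
  · exact hlb n t

end BlockSums

theorem hoffman_cuts_valid_general
    (N T : ℕ)
    (E : Fin N → ℝ) (lb ub : Fin N → Fin T → ℝ)
    (p : Fin T → ℝ)
    (X : Set (Fin N → Fin T → ℝ))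
    (hXdef : X = {ℓ | ∀ n, (∑ t, ℓ n t) = E n ∧ ∀ t, lb n t ≤ ℓ n t ∧ ℓ n t ≤ ub n t})
    (Y : Set (Fin N → Fin T → ℝ))
    (hYdef : Y = {y | ∀ t, (∑ n, y n t) = p t})
    (T0 : Finset (Fin T)) (N0 : Finset (Fin N))
    (ℓ : Fin N → Fin T → ℝ) (hℓ : ℓ ∈ X ∩ Y) :
    (∑ t ∈ T0, p t) ≤ (∑ n ∈ N0, E n)
        + (∑ t ∈ T0, ∑ n ∈ N0ᶜ, ub n t)
        - ∑ t ∈ T0ᶜ, ∑ n ∈ N0, lb n t := by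
  subst hXdef hYdef
  obtain ⟨hX, hY⟩ := hℓ
  have hp : ∑ t ∈ T0, p t = ∑ t ∈ T0, ∑ n, ℓ n t := sum_congr rfl fun t _ => (hY t).symm
  have hE : ∑ n ∈ N0, E n = ∑ n ∈ N0, ∑ t, ℓ n t := sum_congr rfl fun n _ => ((hX n).1).symm
  rw [hp, hE]
  exact sum_cols_le_of_bounds ℓ lb ub (fun n t => ((hX n).2 t).1) (fun n t => ((hX n).2 t).2) T0 N0

/-- **Validity of Hoffman cuts.**
For any subsets `T₀ ⊆ {1,…,T}` and `N₀ ⊆ {1,…,N}`, if there exists `ℓ ∈ X ∩ Y_p`, then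
`Σ_{t∈T₀} p_t ≤ Σ_{n∈N₀} E_n + Σ_{t∈T₀, n∉N₀} x̄_{n,t} − Σ_{t∉T₀, n∈N₀} x̲_{n,t}`;
in particular every cut added in the non-intrusive optimal disaggregation algorithm is
satisfied by every aggregate allocation `p` admitting a feasible disaggregation. -/
theorem hoffman_cuts_valid
    (N T : ℕ) (hN : 0 < N) (hT : 0 < T)
    (E : Fin N → ℝ) (lb ub : Fin N → Fin T → ℝ)
    (hbounds : ∀ n t, lb n t ≤ ub n t)
    (p : Fin T → ℝ)
    (X : Set (Fin N → Fin T → ℝ))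
    (hXdef : X = {ℓ | ∀ n, (∑ t, ℓ n t) = E n ∧ ∀ t, lb n t ≤ ℓ n t ∧ ℓ n t ≤ ub n t})
    (Y : Set (Fin N → Fin T → ℝ))
    (hYdef : Y = {y | ∀ t, (∑ n, y n t) = p t})
    (T0 : Finset (Fin T)) (N0 : Finset (Fin N))
    (ℓ : Fin N → Fin T → ℝ) (hℓ : ℓ ∈ X ∩ Y) :
    (∑ t ∈ T0, p t) ≤ (∑ n ∈ N0, E n)
        + (∑ t ∈ T0, ∑ n ∈ N0ᶜ, ub n t)
        - ∑ t ∈ T0ᶜ, ∑ n ∈ N0, lb n t :=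
  hoffman_cuts_valid_general N T E lb ub p X hXdef Y hYdef T0 N0 ℓ hℓ
end
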